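/- Consider the two-player two-dimensional Battling Influencers Game with action set 𝒳 = [−a,a] × [−a,a] for some a > 0, receiver x̂ = (x_1 + x_2)/2, targets t_1 = (−1, 0) and t_2 = (1, 0), and losses ℓ_i(x_1,x_2) = ‖(x_1+x_2)/2 − t_i‖₂². Then for every z ∈ [−a,a], the profile (x_1, x_2) = ((−a, −z), (a, z)) is a pure Nash equilibrium. In particular, the game has infinitely many pure Nash equilibria. -/

import Mathlib

/-!
At the profile `((−a, −z), (a, z))` the receiver is the origin, which lies on the line through
both targets. Each player already stands on the edge of the square nearest its own target, so a
unilateral deviation can only push the receiver's first coordinate away from that target or move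
its second coordinate off the target line; both only increase the squared distance.
-/

noncomputable section

/-- Squared Euclidean distance between the receiver `x̂ = (x₁ + x₂)/2` and the
target `t` in the plane: `‖(x₁ + x₂)/2 − t‖₂²` written in coordinates. -/
def loss2D (t x1 x2 : ℝ × ℝ) : ℝ :=
  ((x1.1 + x2.1) / 2 - t.1) ^ 2 + ((x1.2 + x2.2) / 2 - t.2) ^ 2

/-- `(x₁, x₂)` is a pure Nash equilibrium of the two-player planar Battling
Influencers Game on the square `𝒳 = [−a, a] × [−a, a]` with targets `t₁, t₂`. -/
def IsPureNE2D (a : ℝ) (t1 t2 x1 x2 : ℝ × ℝ) : Prop :=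
  x1 ∈ Set.Icc (-a) a ×ˢ Set.Icc (-a) a ∧
    x2 ∈ Set.Icc (-a) a ×ˢ Set.Icc (-a) a ∧
    (∀ y ∈ Set.Icc (-a) a ×ˢ Set.Icc (-a) a, loss2D t1 x1 x2 ≤ loss2D t1 y x2) ∧
    (∀ y ∈ Set.Icc (-a) a ×ˢ Set.Icc (-a) a, loss2D t2 x1 x2 ≤ loss2D t2 x1 y)

theorem loss2D_le_loss2D {t x1 x2 y1 y2 : ℝ × ℝ} (h₂ : (x1.2 + x2.2) / 2 = t.2)
    (h₁ : |(x1.1 + x2.1) / 2 - t.1| ≤ |(y1.1 + y2.1) / 2 - t.1|) :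
    loss2D t x1 x2 ≤ loss2D t y1 y2 := by
  unfold loss2D
  rw [h₂, sub_self, zero_pow two_ne_zero, add_zero]
  exact (sq_le_sq.mpr h₁).trans (le_add_of_nonneg_right (sq_nonneg _))

theorem isPureNE2D_opposite_edges {a c₁ c₂ z : ℝ} (ha : 0 ≤ a) (hc₁ : c₁ ≤ 0) (hc₂ : 0 ≤ c₂)
    (hz : z ∈ Set.Icc (-a) a) :
    IsPureNE2D a (c₁, 0) (c₂, 0) (-a, -z) (a, z) := by
  have hneg : -z ∈ Set.Icc (-a) a := Set.neg_mem_Icc_iff.mpr (by rwa [neg_neg])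
  have hleft : -a ∈ Set.Icc (-a) a := Set.left_mem_Icc.mpr (by linarith)
  have hright : a ∈ Set.Icc (-a) a := Set.right_mem_Icc.mpr (by linarith)
  refine ⟨⟨hleft, hneg⟩, ⟨hright, hz⟩, ?_, ?_⟩
  · rintro y ⟨⟨hy, -⟩, -⟩
    refine loss2D_le_loss2D (by simp) (abs_le_abs_of_nonneg ?_ ?_) <;> simp <;> linarith
  · rintro y ⟨⟨-, hy⟩, -⟩
    refine loss2D_le_loss2D (by simp) (abs_le_abs_of_nonpos ?_ ?_) <;> simp <;> linarith

/-- In the planar game with targets `t₁ = (−1, 0)` and `t₂ = (1, 0)` on the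
square `[−a, a]²` with `a > 0`, every profile `((−a, −z), (a, z))` with
`z ∈ [−a, a]` is a pure Nash equilibrium; in particular there are infinitely
many pure Nash equilibria. -/
theorem planar_infinitely_many_pNE (a : ℝ) (ha : 0 < a) :
    (∀ z ∈ Set.Icc (-a) a,
        IsPureNE2D a (-1, 0) (1, 0) (-a, -z) (a, z)) ∧
      {p : (ℝ × ℝ) × (ℝ × ℝ) | IsPureNE2D a (-1, 0) (1, 0) p.1 p.2}.Infinite := by
  have hNE : ∀ z ∈ Set.Icc (-a) a, IsPureNE2D a (-1, 0) (1, 0) (-a, -z) (a, z) :=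
    fun z hz ↦ isPureNE2D_opposite_edges ha.le (by norm_num) zero_le_one hz
  let profile : ℝ → (ℝ × ℝ) × (ℝ × ℝ) := fun z ↦ ((-a, -z), (a, z))
  have hinj : Set.InjOn profile (Set.Icc (-a) a) := fun z _ w _ h ↦
    congrArg (fun p ↦ p.2.2) h
  refine ⟨hNE, ((Set.Icc_infinite (by linarith)).image hinj).mono ?_⟩
  rintro _ ⟨z, hz, rfl⟩
  exact hNE z hz

end
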